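/- arXiv:2305.13084 — 5 statements merged into one kernel-verified Lean document; each statement's English description precedes it below -/
import Mathlib

section
/- Let A be the adjacency matrix of a directed graph with positive in-degrees and out-degrees, D_in = diag(A·1) and D_out = diag(Aᵀ·1) the in- and out-degree matrices, and L = D_in^{-1/2} A D_out^{-1/2} the symmetrically normalized adjacency. Then every element of the numerical range W(L) = {xᴴ L x : xᴴ x = 1, x ∈ ℂᴺ} has absolute value at most 1; in particular every eigenvalue λ of L satisfies |λ| ≤ 1. -/
open Matrix Finset

/-! Weight the edge `j → i` by `A i j`. By AM–GM each term of `xᴴ L x` is bounded by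
`A i j (|x i|² / dᵢⁱⁿ + |x j|² / dⱼᵒᵘᵗ) / 2`; summing over `j` the first halves, and over `i` the
second halves, each give `‖x‖² / 2` since the degrees are exactly the row and column sums of `A`.
So `|xᴴ L x| ≤ ‖x‖²`, and an eigenvector `v` gives `|μ| ‖v‖² = |vᴴ L v| ≤ ‖v‖²`. -/

theorem mul_div_sqrt_mul_sqrt_le {p q : ℝ} (hp : 0 ≤ p) (hq : 0 ≤ q) (a b : ℝ) :
    a * b / (√p * √q) ≤ (a ^ 2 / p + b ^ 2 / q) / 2 := by
  have hpa : a ^ 2 / p = (a / √p) ^ 2 := by rw [div_pow, Real.sq_sqrt hp]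
  have hqb : b ^ 2 / q = (b / √q) ^ 2 := by rw [div_pow, Real.sq_sqrt hq]
  rw [mul_div_mul_comm, hpa, hqb]
  linarith [two_mul_le_add_sq (a / √p) (b / √q)]

namespace Matrix

variable {m n K : Type*} [Fintype m] [Fintype n] [Field K]

theorem sum_sum_mul_div_rowSum (A : Matrix m n K) (hA : ∀ i, ∑ j, A i j ≠ 0) (f : m → K) :
    ∑ i, ∑ j, A i j * (f i / ∑ k, A i k) = ∑ i, f i := by
  refine sum_congr rfl fun i _ => ?_
  rw [← sum_mul, mul_div_cancel₀ _ (hA i)]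

theorem sum_sum_mul_div_colSum (A : Matrix m n K) (hA : ∀ j, ∑ i, A i j ≠ 0) (g : n → K) :
    ∑ i, ∑ j, A i j * (g j / ∑ k, A k j) = ∑ j, g j := by
  rw [sum_comm]
  exact sum_sum_mul_div_rowSum Aᵀ hA g

end Matrix

section

variable {ι : Type*} [Fintype ι]

/-- The form `xᴴ M x`, whose values on unit vectors make up the numerical range of `M`. -/
def quadForm (M : Matrix ι ι ℂ) (x : ι → ℂ) : ℂ :=
  ∑ i, ∑ j, starRingEnd ℂ (x i) * M i j * x j

theorem quadForm_of_mulVec_eq_smul {M : Matrix ι ι ℂ} {μ : ℂ} {v : ι → ℂ} (hv : M *ᵥ v = μ • v) :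
    quadForm M v = μ * ∑ i, (Complex.normSq (v i) : ℂ) := by
  have hrow (i : ι) : ∑ j, M i j * v j = μ * v i := by
    simpa [mulVec, dotProduct] using congrFun hv i
  simp only [quadForm, mul_assoc, ← mul_sum, hrow]
  rw [mul_sum]
  exact sum_congr rfl fun i _ => by rw [Complex.normSq_eq_conj_mul_self]; ring

theorem norm_le_one_of_mulVec_eq_smul {M : Matrix ι ι ℂ}
    (hM : ∀ x, ‖quadForm M x‖ ≤ ∑ i, Complex.normSq (x i))
    {μ : ℂ} {v : ι → ℂ} (hv₀ : v ≠ 0) (hv : M *ᵥ v = μ • v) : ‖μ‖ ≤ 1 := by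
  have hpos : 0 < ∑ i, Complex.normSq (v i) := by
    obtain ⟨i, hi⟩ := Function.ne_iff.1 hv₀
    exact (Complex.normSq_pos.2 hi).trans_le
      (single_le_sum (fun k _ => Complex.normSq_nonneg (v k)) (mem_univ i))
  have hbound := hM v
  rw [quadForm_of_mulVec_eq_smul hv, norm_mul, ← Complex.ofReal_sum, Complex.norm_real,
    Real.norm_of_nonneg hpos.le] at hbound
  exact (mul_le_iff_le_one_left hpos).1 hbound

/-- `D_in^{-1/2} A D_out^{-1/2}`, with the in- and out-degrees read off as row and column sums. -/
noncomputable def symmNormalizedAdj (A : Matrix ι ι ℝ) : Matrix ι ι ℝ :=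
  fun i j => A i j / (√(∑ k, A i k) * √(∑ k, A k j))

theorem norm_quadForm_symmNormalizedAdj_le {A : Matrix ι ι ℝ} (hA : ∀ i j, 0 ≤ A i j)
    (hrow : ∀ i, 0 < ∑ j, A i j) (hcol : ∀ j, 0 < ∑ i, A i j) (x : ι → ℂ) :
    ‖quadForm ((symmNormalizedAdj A).map (↑)) x‖ ≤ ∑ i, Complex.normSq (x i) := by
  have hterm (i j : ι) : ‖starRingEnd ℂ (x i) * (symmNormalizedAdj A i j : ℂ) * x j‖ ≤
      A i j * ((‖x i‖ ^ 2 / ∑ k, A i k + ‖x j‖ ^ 2 / ∑ k, A k j) / 2) := by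
    have hL : 0 ≤ symmNormalizedAdj A i j := div_nonneg (hA i j) (by positivity)
    calc ‖starRingEnd ℂ (x i) * (symmNormalizedAdj A i j : ℂ) * x j‖
        = A i j * (‖x i‖ * ‖x j‖ / (√(∑ k, A i k) * √(∑ k, A k j))) := by
          rw [norm_mul, norm_mul, Complex.norm_conj, Complex.norm_real, Real.norm_of_nonneg hL,
            symmNormalizedAdj]
          ring
      _ ≤ _ := mul_le_mul_of_nonneg_left
          (mul_div_sqrt_mul_sqrt_le (hrow i).le (hcol j).le _ _) (hA i j)
  calc ‖quadForm ((symmNormalizedAdj A).map (↑)) x‖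
      ≤ ∑ i, ∑ j, ‖starRingEnd ℂ (x i) * (symmNormalizedAdj A i j : ℂ) * x j‖ :=
        (norm_sum_le _ _).trans (sum_le_sum fun i _ => norm_sum_le _ _)
    _ ≤ ∑ i, ∑ j, A i j * ((‖x i‖ ^ 2 / ∑ k, A i k + ‖x j‖ ^ 2 / ∑ k, A k j) / 2) :=
        sum_le_sum fun i _ => sum_le_sum fun j _ => hterm i j
    _ = (∑ i, ‖x i‖ ^ 2 + ∑ j, ‖x j‖ ^ 2) / 2 := by
        have hsplit (a u w : ℝ) : a * ((u + w) / 2) = (a * u + a * w) / 2 := by ring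
        simp only [hsplit, ← sum_div, sum_add_distrib]
        rw [A.sum_sum_mul_div_rowSum (fun i => (hrow i).ne'),
          A.sum_sum_mul_div_colSum (fun j => (hcol j).ne')]
    _ = ∑ i, Complex.normSq (x i) := by simp only [Complex.normSq_eq_norm_sq]; ring

end

/-- For a directed graph with 0/1 adjacency matrix `A`, positive
in-degrees and out-degrees, and symmetrically normalized adjacency
`L i j = A i j / (√(d_i^in) * √(d_j^out))`, every element of the numerical range
of `L` has absolute value at most 1; in particular every eigenvalue `μ` of `L`
satisfies `|μ| ≤ 1`. -/
theorem sna_numerical_range_le_one {N : ℕ}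
    (A : Matrix (Fin N) (Fin N) ℝ)
    (hA : ∀ i j, A i j = 0 ∨ A i j = 1)
    (din dout : Fin N → ℝ)
    (hdin : ∀ i, din i = ∑ j, A i j)
    (hdout : ∀ j, dout j = ∑ i, A i j)
    (hdin_pos : ∀ i, 0 < din i) (hdout_pos : ∀ j, 0 < dout j)
    (L : Matrix (Fin N) (Fin N) ℝ)
    (hL : ∀ i j, L i j = A i j / (Real.sqrt (din i) * Real.sqrt (dout j))) :
    (∀ x : Fin N → ℂ, (∑ i, Complex.normSq (x i)) = 1 →
      ‖∑ i, ∑ j, (starRingEnd ℂ) (x i) * (L i j : ℂ) * x j‖ ≤ 1) ∧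
    (∀ (μ : ℂ) (v : Fin N → ℂ), v ≠ 0 →
      (L.map (fun r => (r : ℂ))).mulVec v = μ • v → ‖μ‖ ≤ 1) := by
  have hA_nonneg (i j : Fin N) : 0 ≤ A i j := by rcases hA i j with h | h <;> simp [h]
  obtain rfl : L = symmNormalizedAdj A := by
    ext i j
    rw [hL, hdin, hdout, symmNormalizedAdj]
  have hquad := norm_quadForm_symmNormalizedAdj_le hA_nonneg
    (fun i => hdin i ▸ hdin_pos i) (fun j => hdout j ▸ hdout_pos j)
  exact ⟨fun x hx => hx ▸ hquad x, fun μ v hv₀ hv => norm_le_one_of_mulVec_eq_smul hquad hv₀ hv⟩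
end

section
/- For a directed graph with symmetrically normalized adjacency L and any feature matrix x ∈ ℂ^{N×K}, the Dirichlet energy satisfies E(x) := (1/4) Σ_{i,j} a_{ij} ‖ x_i/√(d_i^in) − x_j/√(d_j^out) ‖² = (1/2) Re( trace( xᴴ (I − L) x ) ). -/
open Matrix Finset

/-- For a directed graph with symmetrically normalized adjacency `L`
and any feature matrix `x ∈ ℂ^{N×K}`, the Dirichlet energy satisfies
`E(x) = (1/4) ∑ᵢⱼ a_{ij} ‖xᵢ/√(dᵢ^in) − xⱼ/√(dⱼ^out)‖² = (1/2) Re(trace(xᴴ (I − L) x))`. -/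
theorem dirichlet_energy_eq_trace {N K : ℕ}
    (A : Matrix (Fin N) (Fin N) ℝ)
    (hA : ∀ i j, A i j = 0 ∨ A i j = 1)
    (din dout : Fin N → ℝ)
    (hdin : ∀ i, din i = ∑ j, A i j)
    (hdout : ∀ j, dout j = ∑ i, A i j)
    (hdin_pos : ∀ i, 0 < din i) (hdout_pos : ∀ j, 0 < dout j)
    (L : Matrix (Fin N) (Fin N) ℝ)
    (hL : ∀ i j, L i j = A i j / (Real.sqrt (din i) * Real.sqrt (dout j)))
    (x : Matrix (Fin N) (Fin K) ℂ) :
    (1 / 4 : ℝ) * ∑ i, ∑ j, A i j *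
        ∑ k, Complex.normSq (x i k / (Real.sqrt (din i) : ℂ)
                              - x j k / (Real.sqrt (dout j) : ℂ))
      = (1 / 2 : ℝ) *
        (Matrix.trace (x.conjTranspose * ((1 - L.map (fun r => (r : ℂ))) * x))).re := by
  have hsqa : ∀ i, Real.sqrt (din i) * Real.sqrt (din i) = din i :=
    fun i => Real.mul_self_sqrt (hdin_pos i).le
  have hsqb : ∀ j, Real.sqrt (dout j) * Real.sqrt (dout j) = dout j :=
    fun j => Real.mul_self_sqrt (hdout_pos j).le
  set S : ℝ := ∑ i, ∑ k, Complex.normSq (x i k) with hS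
  set T : ℝ := ∑ i, ∑ j, ∑ k, L i j * (x i k * (starRingEnd ℂ) (x j k)).re with hT
  have hLHS : (∑ i, ∑ j, A i j *
        ∑ k, Complex.normSq (x i k / (Real.sqrt (din i) : ℂ)
                              - x j k / (Real.sqrt (dout j) : ℂ)))
      = 2 * S - 2 * T := by
    have key : ∀ i j, A i j * ∑ k, Complex.normSq (x i k / (Real.sqrt (din i) : ℂ)
          - x j k / (Real.sqrt (dout j) : ℂ))
        = (A i j / din i) * (∑ k, Complex.normSq (x i k))
          + (A i j / dout j) * (∑ k, Complex.normSq (x j k))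
          - 2 * ∑ k, L i j * (x i k * (starRingEnd ℂ) (x j k)).re := by
      intro i j
      rw [Finset.mul_sum, Finset.mul_sum, Finset.mul_sum, Finset.mul_sum,
        ← Finset.sum_add_distrib, ← Finset.sum_sub_distrib]
      refine Finset.sum_congr rfl fun k _ => ?_
      have hre : (x i k / (Real.sqrt (din i) : ℂ) *
          (starRingEnd ℂ) (x j k / (Real.sqrt (dout j) : ℂ))).re
          = (x i k * (starRingEnd ℂ) (x j k)).re / (Real.sqrt (din i) * Real.sqrt (dout j)) := by
        rw [map_div₀, Complex.conj_ofReal, div_mul_div_comm, ← Complex.ofReal_mul,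
          Complex.div_ofReal_re]
      rw [Complex.normSq_sub, Complex.normSq_div, Complex.normSq_div,
        Complex.normSq_ofReal, Complex.normSq_ofReal, hsqa, hsqb, hre, hL]
      ring
    calc (∑ i, ∑ j, A i j * ∑ k, Complex.normSq (x i k / (Real.sqrt (din i) : ℂ)
            - x j k / (Real.sqrt (dout j) : ℂ)))
        = ∑ i, ∑ j, ((A i j / din i) * (∑ k, Complex.normSq (x i k))
          + (A i j / dout j) * (∑ k, Complex.normSq (x j k))
          - 2 * ∑ k, L i j * (x i k * (starRingEnd ℂ) (x j k)).re) :=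
          Finset.sum_congr rfl fun i _ => Finset.sum_congr rfl fun j _ => key i j
      _ = (∑ i, ∑ j, (A i j / din i) * (∑ k, Complex.normSq (x i k)))
          + (∑ i, ∑ j, (A i j / dout j) * (∑ k, Complex.normSq (x j k)))
          - 2 * T := by
          rw [hT, Finset.mul_sum]
          simp only [Finset.sum_add_distrib, Finset.sum_sub_distrib, Finset.mul_sum]
      _ = S + S - 2 * T := by
          congr 1
          congr 1
          · refine Finset.sum_congr rfl fun i _ => ?_
            rw [← Finset.sum_mul, ← Finset.sum_div, ← hdin, div_self (hdin_pos i).ne', one_mul]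
          · rw [Finset.sum_comm]
            refine Finset.sum_congr rfl fun j _ => ?_
            rw [← Finset.sum_mul, ← Finset.sum_div, ← hdout, div_self (hdout_pos j).ne', one_mul]
      _ = 2 * S - 2 * T := by ring
  have hRHS : (Matrix.trace (x.conjTranspose * ((1 - L.map (fun r => (r : ℂ))) * x))).re
      = S - T := by
    have htr : Matrix.trace (x.conjTranspose * ((1 - L.map (fun r => (r : ℂ))) * x))
        = ∑ k, ∑ i, ((starRingEnd ℂ) (x i k) * x i k
            - ∑ j, (starRingEnd ℂ) (x i k) * ((L i j : ℂ) * x j k)) := by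
      simp only [Matrix.trace, Matrix.diag, Matrix.mul_apply, Matrix.conjTranspose_apply,
        Matrix.sub_apply, Matrix.one_apply, Matrix.map_apply, sub_mul, ite_mul, one_mul,
        zero_mul, Finset.sum_sub_distrib, Finset.sum_ite_eq, Finset.mem_univ, if_true,
        Finset.mul_sum, mul_sub]
      rfl
    rw [htr]
    simp only [Complex.re_sum, Complex.sub_re]
    rw [Finset.sum_comm, hS, hT, ← Finset.sum_sub_distrib]
    refine Finset.sum_congr rfl fun i _ => ?_
    rw [Finset.sum_sub_distrib]
    congr 1
    · exact Finset.sum_congr rfl fun k _ => by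
        rw [mul_comm, Complex.mul_conj, Complex.ofReal_re]
    · rw [Finset.sum_comm]
      refine Finset.sum_congr rfl fun j _ => Finset.sum_congr rfl fun k _ => ?_
      simp only [Complex.mul_re, Complex.mul_im, Complex.conj_re, Complex.conj_im, Complex.ofReal_re,
        Complex.ofReal_im]
      ring
  rw [hLHS, hRHS]
  ring
end

section
/- For a directed graph, there exists a nonzero x ∈ ℝᴺ with Dirichlet energy E(x) = 0 if and only if the graph is weakly balanced. -/
open Matrix Finset

/-- For a directed graph, there exists a nonzero `x ∈ ℝᴺ` with
Dirichlet energy `E(x) = 0` if and only if the graph is weakly balanced. -/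
theorem dirichlet_energy_zero_iff_weakly_balanced {N : ℕ}
    (A : Matrix (Fin N) (Fin N) ℝ)
    (hA : ∀ i j, A i j = 0 ∨ A i j = 1)
    (din dout : Fin N → ℝ)
    (hdin : ∀ i, din i = ∑ j, A i j)
    (hdout : ∀ j, dout j = ∑ i, A i j)
    (hdin_pos : ∀ i, 0 < din i) (hdout_pos : ∀ j, 0 < dout j) :
    (∃ x : Fin N → ℝ, x ≠ 0 ∧
      (1 / 4 : ℝ) * ∑ i, ∑ j, A i j *
        (x i / Real.sqrt (din i) - x j / Real.sqrt (dout j)) ^ 2 = 0) ↔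
    (∃ k : Fin N → ℝ, k ≠ 0 ∧ ∀ i,
      ∑ j, A i j * (k j / Real.sqrt (dout j) - k i / Real.sqrt (din i)) = 0) := by
  have hAnn : ∀ i j, 0 ≤ A i j := by
    intro i j; rcases hA i j with h | h <;> rw [h] <;> norm_num
  constructor
  · rintro ⟨x, hx, hE⟩
    refine ⟨x, hx, fun i => ?_⟩
    have hS : ∑ i, ∑ j, A i j *
        (x i / Real.sqrt (din i) - x j / Real.sqrt (dout j)) ^ 2 = 0 := by
      have := hE
      rcases mul_eq_zero.1 this with h | h
      · norm_num at h
      · exact h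
    have hterm : ∀ i ∈ Finset.univ, ∀ j ∈ (Finset.univ : Finset (Fin N)),
        A i j * (x i / Real.sqrt (din i) - x j / Real.sqrt (dout j)) ^ 2 = 0 := by
      have h1 := (Finset.sum_eq_zero_iff_of_nonneg (fun i _ =>
        Finset.sum_nonneg (fun j _ => mul_nonneg (hAnn i j) (sq_nonneg _)))).1 hS
      intro i _ j hj
      exact (Finset.sum_eq_zero_iff_of_nonneg (fun j _ =>
        mul_nonneg (hAnn i j) (sq_nonneg _))).1 (h1 i (Finset.mem_univ i)) j hj
    apply Finset.sum_eq_zero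
    intro j _
    rcases hA i j with h | h
    · rw [h]; ring
    · have h0 := hterm i (Finset.mem_univ i) j (Finset.mem_univ j)
      rw [h] at h0 ⊢
      have hsq : (x i / Real.sqrt (din i) - x j / Real.sqrt (dout j)) ^ 2 = 0 := by
        linarith
      have : (x i / Real.sqrt (din i) - x j / Real.sqrt (dout j)) = 0 :=
        sq_eq_zero_iff.1 hsq
      have h2 : (x j / Real.sqrt (dout j) - x i / Real.sqrt (din i)) = 0 := by linarith
      rw [h2]; ring
  · rintro ⟨k, hk, hbal⟩
    refine ⟨k, hk, ?_⟩
    set u : Fin N → ℝ := fun i => k i / Real.sqrt (din i) with hu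
    set v : Fin N → ℝ := fun j => k j / Real.sqrt (dout j) with hv
    have hsin : ∀ i, Real.sqrt (din i) ≠ 0 := fun i => Real.sqrt_ne_zero'.2 (hdin_pos i)
    have hsout : ∀ j, Real.sqrt (dout j) ≠ 0 := fun j => Real.sqrt_ne_zero'.2 (hdout_pos j)
    have hu2 : ∀ i, din i * u i ^ 2 = k i ^ 2 := by
      intro i
      have hs : Real.sqrt (din i) ^ 2 = din i := Real.sq_sqrt (hdin_pos i).le
      simp only [hu]
      rw [div_pow, hs, mul_comm (din i), div_mul_cancel₀ _ (hdin_pos i).ne']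
    have hv2 : ∀ j, dout j * v j ^ 2 = k j ^ 2 := by
      intro j
      have hs : Real.sqrt (dout j) ^ 2 = dout j := Real.sq_sqrt (hdout_pos j).le
      simp only [hv]
      rw [div_pow, hs, mul_comm (dout j), div_mul_cancel₀ _ (hdout_pos j).ne']
    have hrow : ∀ i, ∑ j, A i j * v j = din i * u i := by
      intro i
      have h := hbal i
      have hsplit : ∑ j, A i j * (v j - u i) = (∑ j, A i j * v j) - (∑ j, A i j) * u i := by
        rw [Finset.sum_mul, ← Finset.sum_sub_distrib]
        exact Finset.sum_congr rfl fun j _ => by ring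
      rw [hsplit] at h
      rw [← hdin i] at *
      linarith
    have key : ∀ i, ∑ j, A i j * (u i - v j) ^ 2 =
        (∑ j, A i j * v j ^ 2) - din i * u i ^ 2 := by
      intro i
      have hexp : ∑ j, A i j * (u i - v j) ^ 2 =
          (∑ j, A i j) * u i ^ 2 - 2 * u i * (∑ j, A i j * v j) + ∑ j, A i j * v j ^ 2 := by
        rw [Finset.sum_mul, Finset.mul_sum, ← Finset.sum_sub_distrib, ← Finset.sum_add_distrib]
        exact Finset.sum_congr rfl fun j _ => by ring
      rw [hexp, hrow i, ← hdin i]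
      ring
    have hcols : ∑ i, ∑ j, A i j * v j ^ 2 = ∑ j, dout j * v j ^ 2 := by
      rw [Finset.sum_comm]
      apply Finset.sum_congr rfl
      intro j _
      rw [hdout j, Finset.sum_mul]
    calc (1 / 4 : ℝ) * ∑ i, ∑ j, A i j * (u i - v j) ^ 2
        = (1 / 4 : ℝ) * ∑ i, ((∑ j, A i j * v j ^ 2) - din i * u i ^ 2) := by
          congr 1; exact Finset.sum_congr rfl (fun i _ => key i)
      _ = (1 / 4 : ℝ) * ((∑ i, ∑ j, A i j * v j ^ 2) - ∑ i, din i * u i ^ 2) := by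
          rw [Finset.sum_sub_distrib]
      _ = (1 / 4 : ℝ) * ((∑ j, dout j * v j ^ 2) - ∑ i, din i * u i ^ 2) := by rw [hcols]
      _ = (1 / 4 : ℝ) * ((∑ j, k j ^ 2) - ∑ i, k i ^ 2) := by
          rw [Finset.sum_congr rfl (fun j _ => hv2 j), Finset.sum_congr rfl (fun i _ => hu2 i)]
      _ = 0 := by ring_nf
end

section
/- Let G be an undirected graph with symmetric normalized adjacency L (eigenvalues λ₁ ≤ … ≤ λ_N, λ_N = 1), W ∈ ℝ^{K×K} symmetric with eigenvalues μ₁ ≤ … ≤ μ_K, and α > 0. Consider the solution of x'(t) = −L^α x(t) W. If μ_K · sign(λ₁)|λ₁|^α < μ₁, then for almost all initial conditions x₀ (i.e., whenever the Fourier coefficient of x₀ along the dominant eigendirection is nonzero and the dominant frequency is unique), the normalized Dirichlet energy satisfies E(x(t)/‖x(t)‖) → (1 − λ₁)/2 as t → ∞ (highest-frequency dominance); otherwise E(x(t)/‖x(t)‖) → 0 (lowest-frequency dominance). -/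
/-!
Vectorising `x' = -L^α x W` gives `y' = -(W ⊗ L^α) y`, whose eigenvectors are the Kronecker
products `φ_r ⊗ ψ_l` with eigenvalues `μ_r · sign(λ_l)|λ_l|^α`. The solution is
`y(t) = Σ c_{r,l} e^{-t μ_r sign(λ_l)|λ_l|^α} φ_r ⊗ ψ_l`, so after normalisation the mode with the
strictly smallest eigenvalue wins: `y(t)/‖y(t)‖ → ± φ_r ⊗ ψ_l` for that mode. The Dirichlet energy
is continuous, even, and equals `(1 - λ_l)/2` on `φ_r ⊗ ψ_l`. For HFD the dominant mode is
`(K, 1)`, giving `(1 - λ₁)/2`; for LFD it is `(1, N)`, giving `(1 - λ_N)/2 = 0`.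
-/

open Matrix Finset Filter Topology NormedSpace

theorem NormedSpace.continuousAt_normalize {V : Type*} [NormedAddCommGroup V] [NormedSpace ℝ V]
    {x : V} (hx : x ≠ 0) : ContinuousAt NormedSpace.normalize x :=
  (continuousAt_id.norm.inv₀ (norm_ne_zero_iff.mpr hx)).smul continuousAt_id

theorem tendsto_sum_exp_smul_of_forall_lt {ι V : Type*} [Fintype ι] [AddCommGroup V] [Module ℝ V]
    [TopologicalSpace V] [IsTopologicalAddGroup V] [ContinuousSMul ℝ V]
    (ν c : ι → ℝ) (f : ι → V) {q₀ : ι} (hdom : ∀ q ≠ q₀, ν q₀ < ν q) :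
    Tendsto (fun t => ∑ q, (c q * Real.exp (-(ν q - ν q₀) * t)) • f q) atTop
      (𝓝 (c q₀ • f q₀)) := by
  classical
  have hterm (q : ι) : Tendsto (fun t => (c q * Real.exp (-(ν q - ν q₀) * t)) • f q) atTop
      (𝓝 (if q = q₀ then c q₀ • f q₀ else 0)) := by
    split_ifs with hq
    · subst hq; simpa using tendsto_const_nhds
    · have hexp : Tendsto (fun t => Real.exp (-(ν q - ν q₀) * t)) atTop (𝓝 0) :=
        Real.tendsto_exp_atBot.comp <|
          tendsto_id.const_mul_atTop_of_neg (neg_lt_zero.mpr (sub_pos.mpr (hdom q hq)))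
      simpa using (hexp.const_mul (c q)).smul_const (f q)
  simpa using tendsto_finsetSum univ fun q _ => hterm q

section LinearODE

variable {V ι : Type*} [NormedAddCommGroup V] [NormedSpace ℝ V] [Fintype ι]
  {T : V →L[ℝ] V} {b : Module.Basis ι ℝ V} {ν : ι → ℝ}

theorem hasDerivAt_sum_exp_smul (hTb : ∀ q, T (b q) = ν q • b q) (c : ι → ℝ) (t : ℝ) :
    HasDerivAt (fun t => ∑ q, (c q * Real.exp (-ν q * t)) • b q)
      (-T (∑ q, (c q * Real.exp (-ν q * t)) • b q)) t := by
  have hterm (q : ι) : HasDerivAt (fun t => (c q * Real.exp (-ν q * t)) • b q)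
      ((c q * (Real.exp (-ν q * t) * (-ν q * 1))) • b q) t :=
    ((((hasDerivAt_id t).const_mul (-ν q)).exp).const_mul (c q)).smul_const (b q)
  convert HasDerivAt.fun_sum fun q _ => hterm q using 1
  simp only [map_sum, map_smul, hTb, smul_smul, ← sum_neg_distrib, ← neg_smul]
  exact sum_congr rfl fun q _ => by ring_nf

theorem eq_sum_exp_smul_of_hasDerivAt (hTb : ∀ q, T (b q) = ν q • b q) {y : ℝ → V}
    (hy : ∀ t, HasDerivAt y (-T (y t)) t) {t : ℝ} (ht : 0 ≤ t) :
    y t = ∑ q, (b.repr (y 0) q * Real.exp (-ν q * t)) • b q := by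
  have hz := hasDerivAt_sum_exp_smul hTb (b.repr (y 0))
  refine ODE_solution_unique (v := fun _ => ⇑(-T)) (fun _ => (-T).lipschitz)
    (continuous_iff_continuousAt.2 fun s => (hy s).continuousAt).continuousOn
    (fun s _ => (hy s).hasDerivWithinAt)
    (continuous_iff_continuousAt.2 fun s => (hz s).continuousAt).continuousOn
    (fun s _ => (hz s).hasDerivWithinAt) (by simp [b.sum_repr]) ⟨ht, le_rfl⟩

theorem tendsto_normalize_of_hasDerivAt (hTb : ∀ q, T (b q) = ν q • b q) {y : ℝ → V}
    (hy : ∀ t, HasDerivAt y (-T (y t)) t) {q₀ : ι} (hdom : ∀ q ≠ q₀, ν q₀ < ν q)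
    (hc : b.repr (y 0) q₀ ≠ 0) :
    Tendsto (fun t => normalize (y t)) atTop (𝓝 (normalize (b.repr (y 0) q₀ • b q₀))) := by
  have hfactor : ∀ᶠ t in atTop, y t =
      Real.exp (-ν q₀ * t) • ∑ q, (b.repr (y 0) q * Real.exp (-(ν q - ν q₀) * t)) • b q := by
    filter_upwards [eventually_ge_atTop 0] with t ht
    rw [eq_sum_exp_smul_of_hasDerivAt hTb hy ht, smul_sum]
    refine sum_congr rfl fun q _ => ?_
    rw [smul_smul, mul_left_comm, ← Real.exp_add]
    ring_nf
  refine ((continuousAt_normalize (smul_ne_zero hc (b.ne_zero q₀))).tendsto.comp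
    (tendsto_sum_exp_smul_of_forall_lt ν (b.repr (y 0)) b hdom)).congr' ?_
  filter_upwards [hfactor] with t ht
  rw [ht, Function.comp_apply, normalize_smul_of_pos (Real.exp_pos _)]

end LinearODE

namespace Matrix

variable {R ι m n : Type*} [CommSemiring R] [Fintype m] [Fintype n]

theorem mulVec_eq_smul_of_eq_sum_smul_vecMulVec [Fintype ι] [DecidableEq ι] {A : Matrix n n R}
    {ev : ι → R} {u : ι → n → R} (horth : ∀ l l', ∑ i, u l i * u l' i = if l = l' then 1 else 0)
    (hA : A = ∑ l, ev l • vecMulVec (u l) (u l)) (l : ι) : A *ᵥ u l = ev l • u l := by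
  simp_rw [hA, sum_mulVec, smul_mulVec, vecMulVec_mulVec, op_smul_eq_smul, smul_smul]
  simp [dotProduct, horth]

theorem dotProduct_mul_mul (a a' : m → R) (b b' : n → R) :
    (fun p : m × n => a p.1 * b p.2) ⬝ᵥ (fun p => a' p.1 * b' p.2) = (a ⬝ᵥ a') * (b ⬝ᵥ b') := by
  simp only [dotProduct, sum_mul_sum, Fintype.sum_prod_type]
  exact sum_congr rfl fun i _ => sum_congr rfl fun j _ => by ring

theorem kroneckerMap_mul_mulVec_eq_smul {A : Matrix m m R} {B : Matrix n n R} {a : m → R}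
    {b : n → R} {κ η : R} (ha : A *ᵥ a = κ • a) (hb : B *ᵥ b = η • b) :
    kroneckerMap (· * ·) A B *ᵥ (fun p => a p.1 * b p.2) = (κ * η) • fun p => a p.1 * b p.2 := by
  ext q
  have hrow : (A *ᵥ a) q.1 * (B *ᵥ b) q.2 = (κ * η) * (a q.1 * b q.2) := by
    rw [ha, hb, Pi.smul_apply, Pi.smul_apply, smul_eq_mul, smul_eq_mul]; ring
  rw [Pi.smul_apply, smul_eq_mul, ← hrow]
  simp only [mulVec, ← dotProduct_mul_mul]
  exact sum_congr rfl fun p _ => by simp only [kroneckerMap_apply]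

theorem continuous_dotProduct_mulVec [TopologicalSpace R] [IsTopologicalSemiring R]
    (A : Matrix n n R) : Continuous fun v : n → R => v ⬝ᵥ A *ᵥ v := by
  simp only [dotProduct, mulVec]
  fun_prop

theorem smul_dotProduct_mulVec_smul (A : Matrix n n R) (a : R) (v : n → R) :
    (a • v) ⬝ᵥ A *ᵥ (a • v) = a ^ 2 * (v ⬝ᵥ A *ᵥ v) := by
  rw [mulVec_smul, smul_dotProduct, dotProduct_smul, smul_eq_mul, smul_eq_mul]
  ring

theorem dotProduct_kroneckerMap_mul_mulVec_of_eq_smul {A : Matrix m m R} {B : Matrix n n R}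
    {a : m → R} {b : n → R} {κ η : R} (ha : A *ᵥ a = κ • a) (hb : B *ᵥ b = η • b)
    (ha₁ : a ⬝ᵥ a = 1) (hb₁ : b ⬝ᵥ b = 1) :
    (fun p : m × n => a p.1 * b p.2) ⬝ᵥ kroneckerMap (· * ·) A B *ᵥ (fun p => a p.1 * b p.2) =
      κ * η := by
  rw [kroneckerMap_mul_mulVec_eq_smul ha hb, dotProduct_smul, dotProduct_mul_mul, ha₁, hb₁,
    smul_eq_mul, mul_one, mul_one]

end Matrix

theorem orthonormal_toLp_mul {ι κ m n : Type*} [Fintype m] [Fintype n] [DecidableEq ι]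
    [DecidableEq κ] {φ : ι → m → ℝ} {ψ : κ → n → ℝ}
    (hφ : ∀ r r', ∑ i, φ r i * φ r' i = if r = r' then 1 else 0)
    (hψ : ∀ l l', ∑ i, ψ l i * ψ l' i = if l = l' then 1 else 0) :
    Orthonormal ℝ fun q : ι × κ => WithLp.toLp 2 fun p : m × n => φ q.1 p.1 * ψ q.2 p.2 := by
  rw [orthonormal_iff_ite]
  intro q q'
  simp only [EuclideanSpace.inner_eq_star_dotProduct, star_trivial, dotProduct_mul_mul]
  simp only [dotProduct, hφ, hψ, Prod.ext_iff]
  split_ifs <;> simp_all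

section KroneckerHeat

variable {m n : Type*} [Fintype m] [Fintype n] [DecidableEq m] [DecidableEq n]
  {W : Matrix m m ℝ} {μ : m → ℝ} {φ : m → m → ℝ} {Lα : Matrix n n ℝ} {κ : n → ℝ}
  {ψ : n → n → ℝ} {y : ℝ → EuclideanSpace ℝ (m × n)} {q₀ : m × n}

theorem tendsto_normalize_of_hasDerivAt_kroneckerMap
    (hφ : ∀ r r', ∑ i, φ r i * φ r' i = if r = r' then 1 else 0)
    (hW : W = ∑ r, μ r • vecMulVec (φ r) (φ r))
    (hψ : ∀ l l', ∑ i, ψ l i * ψ l' i = if l = l' then 1 else 0)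
    (hLα : Lα = ∑ l, κ l • vecMulVec (ψ l) (ψ l))
    (hy : ∀ t, HasDerivAt y (WithLp.toLp 2 (-(kroneckerMap (· * ·) W Lα *ᵥ y t))) t)
    (hdom : ∀ q ≠ q₀, μ q₀.1 * κ q₀.2 < μ q.1 * κ q.2)
    (hc : ∑ p, y 0 p * (φ q₀.1 p.1 * ψ q₀.2 p.2) ≠ 0) :
    Tendsto (fun t => normalize (y t)) atTop
      (𝓝 ((SignType.sign (∑ p, y 0 p * (φ q₀.1 p.1 * ψ q₀.2 p.2)) : ℝ) •
        WithLp.toLp 2 fun p => φ q₀.1 p.1 * ψ q₀.2 p.2)) := by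
  set v : m × n → EuclideanSpace ℝ (m × n) := fun q => WithLp.toLp 2 fun p => φ q.1 p.1 * ψ q.2 p.2
  have hv : Orthonormal ℝ v := orthonormal_toLp_mul hφ hψ
  let b : OrthonormalBasis (m × n) ℝ (EuclideanSpace ℝ (m × n)) :=
    (basisOfLinearIndependentOfCardEqFinrank' _ hv.linearIndependent (by simp)).toOrthonormalBasis
      (by simpa using hv)
  have hb : ⇑b.toBasis = v := by simp [b]
  have hTb (q : m × n) : toEuclideanCLM (𝕜 := ℝ) (kroneckerMap (· * ·) W Lα) (b.toBasis q) =
      (μ q.1 * κ q.2) • b.toBasis q := by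
    rw [hb]
    exact congrArg (WithLp.toLp 2) <| kroneckerMap_mul_mulVec_eq_smul
      (mulVec_eq_smul_of_eq_sum_smul_vecMulVec hφ hW q.1)
      (mulVec_eq_smul_of_eq_sum_smul_vecMulVec hψ hLα q.2)
  have hc₀ : b.toBasis.repr (y 0) q₀ = ∑ p, y 0 p * (φ q₀.1 p.1 * ψ q₀.2 p.2) := by
    rw [OrthonormalBasis.coe_toBasis_repr_apply, b.repr_apply_apply,
      ← OrthonormalBasis.coe_toBasis, hb]
    simp [EuclideanSpace.inner_eq_star_dotProduct, dotProduct, v]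
  have hlim := tendsto_normalize_of_hasDerivAt hTb
    (fun t => (hy t).congr_deriv (by simp [← toEuclideanCLM_toLp])) hdom (hc₀ ▸ hc)
  rwa [normalize_smul, hb, normalize_eq_self_of_norm_eq_one (hv.1 q₀), hc₀] at hlim

theorem tendsto_energy_normalize_of_hasDerivAt_kroneckerMap
    (hφ : ∀ r r', ∑ i, φ r i * φ r' i = if r = r' then 1 else 0)
    (hW : W = ∑ r, μ r • vecMulVec (φ r) (φ r))
    (hψ : ∀ l l', ∑ i, ψ l i * ψ l' i = if l = l' then 1 else 0) {L : Matrix n n ℝ} {lam : n → ℝ}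
    (hL : L = ∑ l, lam l • vecMulVec (ψ l) (ψ l)) (hLα : Lα = ∑ l, κ l • vecMulVec (ψ l) (ψ l))
    (hy : ∀ t, HasDerivAt y (WithLp.toLp 2 (-(kroneckerMap (· * ·) W Lα *ᵥ y t))) t)
    (hdom : ∀ q ≠ q₀, μ q₀.1 * κ q₀.2 < μ q.1 * κ q.2)
    (hc : ∑ p, y 0 p * (φ q₀.1 p.1 * ψ q₀.2 p.2) ≠ 0) :
    Tendsto (fun t => (1 / 2 : ℝ) * ((normalize (y t)).ofLp ⬝ᵥ
        kroneckerMap (· * ·) (1 : Matrix m m ℝ) (1 - L) *ᵥ (normalize (y t)).ofLp))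
      atTop (𝓝 ((1 - lam q₀.2) / 2)) := by
  have henergy : Continuous fun w : EuclideanSpace ℝ (m × n) => (1 / 2 : ℝ) *
      (w.ofLp ⬝ᵥ kroneckerMap (· * ·) (1 : Matrix m m ℝ) (1 - L) *ᵥ w.ofLp) :=
    (continuous_const.mul (continuous_dotProduct_mulVec _)).comp (PiLp.continuous_ofLp 2 _)
  have hval (s : ℝ) (hs : s ^ 2 = 1) : (1 / 2 : ℝ) *
      ((s • WithLp.toLp 2 fun p => φ q₀.1 p.1 * ψ q₀.2 p.2).ofLp ⬝ᵥ
        kroneckerMap (· * ·) (1 : Matrix m m ℝ) (1 - L) *ᵥ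
          (s • WithLp.toLp 2 fun p => φ q₀.1 p.1 * ψ q₀.2 p.2).ofLp) = (1 - lam q₀.2) / 2 := by
    rw [WithLp.ofLp_smul, smul_dotProduct_mulVec_smul, hs, WithLp.ofLp_toLp,
      dotProduct_kroneckerMap_mul_mulVec_of_eq_smul (a := φ q₀.1) (b := ψ q₀.2) (κ := 1)
        (η := 1 - lam q₀.2)
        (by rw [one_mulVec, one_smul])
        (by rw [sub_mulVec, one_mulVec, mulVec_eq_smul_of_eq_sum_smul_vecMulVec hψ hL,
          sub_smul, one_smul]) (by simp [dotProduct, hφ]) (by simp [dotProduct, hψ])]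
    ring
  have hsign : (SignType.sign (∑ p, y 0 p * (φ q₀.1 p.1 * ψ q₀.2 p.2)) : ℝ) ^ 2 = 1 := by
    rcases hc.lt_or_gt with h | h
    · rw [sign_neg h]; norm_num
    · rw [sign_pos h]; norm_num
  exact hval _ hsign ▸ (henergy.tendsto _).comp
    (tendsto_normalize_of_hasDerivAt_kroneckerMap hφ hW hψ hLα hy hdom hc)

end KroneckerHeat

theorem fractional_heat_HFD_or_LFD_general {n kk : ℕ}
    (L : Matrix (Fin (n + 1)) (Fin (n + 1)) ℝ)
    (lam : Fin (n + 1) → ℝ) (ψ : Fin (n + 1) → Fin (n + 1) → ℝ)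
    (hψorth : ∀ l l', ∑ i, ψ l i * ψ l' i = if l = l' then 1 else 0)
    (hLspec : L = ∑ l, lam l • Matrix.vecMulVec (ψ l) (ψ l))
    (hlam_last : lam (Fin.last n) = 1)
    (W : Matrix (Fin (kk + 1)) (Fin (kk + 1)) ℝ)
    (μ : Fin (kk + 1) → ℝ) (φ : Fin (kk + 1) → Fin (kk + 1) → ℝ)
    (hφorth : ∀ r r', ∑ i, φ r i * φ r' i = if r = r' then 1 else 0)
    (hWspec : W = ∑ r, μ r • Matrix.vecMulVec (φ r) (φ r))
    (pw : ℝ → ℝ)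
    (Lα : Matrix (Fin (n + 1)) (Fin (n + 1)) ℝ)
    (hLα : Lα = ∑ l, pw (lam l) • Matrix.vecMulVec (ψ l) (ψ l))
    -- the solution of the vectorized ODE
    (x₀ : EuclideanSpace ℝ (Fin (kk + 1) × Fin (n + 1)))
    (y : ℝ → EuclideanSpace ℝ (Fin (kk + 1) × Fin (n + 1)))
    (hy0 : y 0 = x₀)
    (hy : ∀ t, HasDerivAt y
      (WithLp.toLp 2 (-(Matrix.kroneckerMap (· * ·) W Lα).mulVec (y t) :
        Fin (kk + 1) × Fin (n + 1) → ℝ)) t)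
    -- Fourier coefficients of the initial datum
    (c : Fin (kk + 1) → Fin (n + 1) → ℝ)
    (hc : ∀ r l, c r l = ∑ p : Fin (kk + 1) × Fin (n + 1), x₀ p * (φ r p.1 * ψ l p.2))
    -- Dirichlet energy of the normalized features
    (E : (Fin (kk + 1) × Fin (n + 1) → ℝ) → ℝ)
    (hE : E = fun v => (1 / 2 : ℝ) *
      dotProduct v
        ((Matrix.kroneckerMap (· * ·) (1 : Matrix (Fin (kk + 1)) (Fin (kk + 1)) ℝ)
          (1 - L)).mulVec v)) :
    -- HFD case
    ((μ (Fin.last kk) * pw (lam 0) < μ 0 ∧ c (Fin.last kk) 0 ≠ 0 ∧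
        (∀ r l, (r, l) ≠ (Fin.last kk, (0 : Fin (n + 1))) →
          μ (Fin.last kk) * pw (lam 0) < μ r * pw (lam l))) →
      Tendsto (fun t => E ((‖y t‖)⁻¹ • y t)) atTop (𝓝 ((1 - lam 0) / 2))) ∧
    -- LFD case
    ((¬ (μ (Fin.last kk) * pw (lam 0) < μ 0) ∧ c 0 (Fin.last n) ≠ 0 ∧
        (∀ r l, (r, l) ≠ ((0 : Fin (kk + 1)), Fin.last n) →
          μ 0 * pw (lam (Fin.last n)) < μ r * pw (lam l))) →
      Tendsto (fun t => E ((‖y t‖)⁻¹ • y t)) atTop (𝓝 0)) := by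
  subst hE hy0
  refine ⟨fun ⟨_, hc₀, hdom⟩ => ?_, fun ⟨_, hc₀, hdom⟩ => ?_⟩
  · exact tendsto_energy_normalize_of_hasDerivAt_kroneckerMap (q₀ := (Fin.last kk, 0))
      hφorth hWspec hψorth hLspec hLα hy (fun q hq => hdom q.1 q.2 hq) (hc _ _ ▸ hc₀)
  · have hlim := tendsto_energy_normalize_of_hasDerivAt_kroneckerMap (q₀ := (0, Fin.last n))
      hφorth hWspec hψorth hLspec hLα hy (fun q hq => hdom q.1 q.2 hq) (hc _ _ ▸ hc₀)
    rwa [hlam_last, sub_self, zero_div] at hlim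

/-- Let `G` be a connected undirected graph with symmetric
normalized adjacency `L` (eigenvalues `λ₁ ≤ … ≤ λ_N`, `λ_N = 1`, `λ₁ < 0`),
`W` symmetric with eigenvalues `μ₁ ≤ … ≤ μ_K`, and `α > 0`. For the solution of
`x' = −L^α x W` (vectorized: `y' = −(W ⊗ L^α) y`): if
`μ_K · sign(λ₁)|λ₁|^α < μ₁`, then for almost all initial data (i.e. whenever
the Fourier coefficient along the dominant eigendirection is nonzero and the
dominant frequency is unique) the normalized Dirichlet energy converges to
`(1 − λ₁)/2` (HFD); otherwise it converges to `0` (LFD). -/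
theorem fractional_heat_HFD_or_LFD {n kk : ℕ}
    (L : Matrix (Fin (n + 1)) (Fin (n + 1)) ℝ) (hLsym : L.IsSymm)
    (lam : Fin (n + 1) → ℝ) (ψ : Fin (n + 1) → Fin (n + 1) → ℝ)
    (hψorth : ∀ l l', ∑ i, ψ l i * ψ l' i = if l = l' then 1 else 0)
    (hLspec : L = ∑ l, lam l • Matrix.vecMulVec (ψ l) (ψ l))
    (hlam_mono : Monotone lam) (hlam_last : lam (Fin.last n) = 1)
    (hlam_neg : lam 0 < 0)
    (W : Matrix (Fin (kk + 1)) (Fin (kk + 1)) ℝ) (hWsym : W.IsSymm)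
    (μ : Fin (kk + 1) → ℝ) (φ : Fin (kk + 1) → Fin (kk + 1) → ℝ)
    (hφorth : ∀ r r', ∑ i, φ r i * φ r' i = if r = r' then 1 else 0)
    (hWspec : W = ∑ r, μ r • Matrix.vecMulVec (φ r) (φ r))
    (hμ_mono : Monotone μ)
    (α : ℝ) (hα : 0 < α)
    (pw : ℝ → ℝ) (hpw : pw = fun s => Real.sign s * |s| ^ α)
    (Lα : Matrix (Fin (n + 1)) (Fin (n + 1)) ℝ)
    (hLα : Lα = ∑ l, pw (lam l) • Matrix.vecMulVec (ψ l) (ψ l))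
    -- the solution of the vectorized ODE
    (x₀ : EuclideanSpace ℝ (Fin (kk + 1) × Fin (n + 1)))
    (y : ℝ → EuclideanSpace ℝ (Fin (kk + 1) × Fin (n + 1)))
    (hy0 : y 0 = x₀)
    (hy : ∀ t, HasDerivAt y
      (WithLp.toLp 2 (-(Matrix.kroneckerMap (· * ·) W Lα).mulVec (y t) :
        Fin (kk + 1) × Fin (n + 1) → ℝ)) t)
    -- Fourier coefficients of the initial datum
    (c : Fin (kk + 1) → Fin (n + 1) → ℝ)
    (hc : ∀ r l, c r l = ∑ p : Fin (kk + 1) × Fin (n + 1), x₀ p * (φ r p.1 * ψ l p.2))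
    -- Dirichlet energy of the normalized features
    (E : (Fin (kk + 1) × Fin (n + 1) → ℝ) → ℝ)
    (hE : E = fun v => (1 / 2 : ℝ) *
      dotProduct v
        ((Matrix.kroneckerMap (· * ·) (1 : Matrix (Fin (kk + 1)) (Fin (kk + 1)) ℝ)
          (1 - L)).mulVec v)) :
    -- HFD case
    ((μ (Fin.last kk) * pw (lam 0) < μ 0 ∧ c (Fin.last kk) 0 ≠ 0 ∧
        (∀ r l, (r, l) ≠ (Fin.last kk, (0 : Fin (n + 1))) →
          μ (Fin.last kk) * pw (lam 0) < μ r * pw (lam l))) →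
      Tendsto (fun t => E ((‖y t‖)⁻¹ • y t)) atTop (𝓝 ((1 - lam 0) / 2))) ∧
    -- LFD case
    ((¬ (μ (Fin.last kk) * pw (lam 0) < μ 0) ∧ c 0 (Fin.last n) ≠ 0 ∧
        (∀ r l, (r, l) ≠ ((0 : Fin (kk + 1)), Fin.last n) →
          μ 0 * pw (lam (Fin.last n)) < μ r * pw (lam l))) →
      Tendsto (fun t => E ((‖y t‖)⁻¹ • y t)) atTop (𝓝 0)) :=
  fractional_heat_HFD_or_LFD_general L lam ψ hψorth hLspec hlam_last W μ φ hφorth hWspec pw Lα hLα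
    x₀ y hy0 hy c hc E hE
end

section
/- Let L be the symmetrically normalized adjacency of a strongly connected, weakly balanced directed graph with period h. Then −1 is an eigenvalue of L if and only if h is even. (In particular, for undirected connected graphs, −1 ∈ spec(L) iff the graph is bipartite.) -/
/-!
If `L v = μ v` with `μ = ±1`, then `s j = v j / √(dout j)` and `t i = μ v i / √(din i)` satisfy
`∑ j, A i j (s j - t i) = 0` for every `i` and carry the same weighted mass, so the energy
`∑ i j, A i j (s j - t i)²` vanishes and `s j = t i` on every edge `i → j`.
Applied to the weak-balance vector `k` (eigenvalue `1`), this makes `k` nowhere zero by strong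
connectivity; applied to a `-1`-eigenvector `v`, it makes `v / k` change sign along every edge, so
every closed walk through a node where `v ≠ 0` has even length. Conversely, if the period is even,
the parity of the length of walks from a fixed node is well defined and 2-colours the graph;
flipping the sign of `k` on one colour class gives a `-1`-eigenvector.
-/

open Matrix Finset

section NormalizedAdjacency

variable {ι : Type*} [Fintype ι]

theorem eq_of_balanced_of_sum_sq_eq {A : Matrix ι ι ℝ} (hA : ∀ i j, 0 ≤ A i j)
    {s t : ι → ℝ} (hbal : ∀ i, ∑ j, A i j * (s j - t i) = 0)
    (hsq : ∑ j, (∑ i, A i j) * s j ^ 2 = ∑ i, (∑ j, A i j) * t i ^ 2)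
    {i j : ι} (hij : 0 < A i j) : s j = t i := by
  have henergy : ∑ i, ∑ j, A i j * (s j - t i) ^ 2 = 0 := by
    calc ∑ i, ∑ j, A i j * (s j - t i) ^ 2
        = ∑ i, (∑ j, A i j * s j ^ 2 - (∑ j, A i j) * t i ^ 2
            - 2 * t i * ∑ j, A i j * (s j - t i)) := by
          refine sum_congr rfl fun i _ => ?_
          rw [sum_mul, mul_sum, ← sum_sub_distrib, ← sum_sub_distrib]
          exact sum_congr rfl fun j _ => by ring
      _ = ∑ j, (∑ i, A i j) * s j ^ 2 - ∑ i, (∑ j, A i j) * t i ^ 2 := by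
          simp only [hbal, mul_zero, sub_zero, sum_sub_distrib, sum_mul]
          rw [sum_comm]
      _ = 0 := sub_eq_zero.2 hsq
  have hrow := (sum_eq_zero_iff_of_nonneg fun i _ =>
    sum_nonneg fun j _ => mul_nonneg (hA i j) (sq_nonneg _)).1 henergy i (mem_univ i)
  have hterm := (sum_eq_zero_iff_of_nonneg fun j _ =>
    mul_nonneg (hA i j) (sq_nonneg _)).1 hrow j (mem_univ j)
  rw [mul_eq_zero, or_iff_right hij.ne', sq_eq_zero_iff, sub_eq_zero] at hterm
  exact hterm

noncomputable def normalizedAdj (A : Matrix ι ι ℝ) : Matrix ι ι ℝ :=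
  of fun i j => A i j / (√(∑ k, A i k) * √(∑ k, A k j))

theorem normalizedAdj_mulVec_eq_smul_iff {A : Matrix ι ι ℝ} (hr : ∀ i, 0 < ∑ j, A i j)
    (μ : ℝ) (v : ι → ℝ) :
    normalizedAdj A *ᵥ v = μ • v ↔
      ∀ i, ∑ j, A i j * (v j / √(∑ k, A k j) - μ * v i / √(∑ k, A i k)) = 0 := by
  refine funext_iff.trans (forall_congr' fun i => ?_)
  have hs : √(∑ k, A i k) ≠ 0 := (Real.sqrt_pos.2 (hr i)).ne'
  have hL : (normalizedAdj A *ᵥ v) i = (∑ j, A i j * (v j / √(∑ k, A k j))) / √(∑ k, A i k) := by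
    simp only [mulVec, dotProduct, normalizedAdj, of_apply, sum_div]
    exact sum_congr rfl fun j _ => by ring
  have hμ : (μ • v) i = (∑ j, A i j * (μ * v i / √(∑ k, A i k))) / √(∑ k, A i k) := by
    rw [← sum_mul, mul_div_assoc, div_div, Real.mul_self_sqrt (hr i).le,
      mul_div_cancel₀ _ (hr i).ne', Pi.smul_apply, smul_eq_mul]
  simp only [hL, hμ, div_left_inj' hs, mul_sub, sum_sub_distrib, sub_eq_zero]

theorem sq_mul_div_sqrt_sq {d : ℝ} (hd : 0 < d) {μ : ℝ} (hμ : μ ^ 2 = 1) (x : ℝ) :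
    d * (μ * x / √d) ^ 2 = x ^ 2 := by
  rw [div_pow, mul_pow, hμ, one_mul, Real.sq_sqrt hd.le, mul_div_cancel₀ _ hd.ne']

theorem normalizedAdj_eigenvector_edge {A : Matrix ι ι ℝ} (hA : ∀ i j, 0 ≤ A i j)
    (hr : ∀ i, 0 < ∑ j, A i j) (hc : ∀ j, 0 < ∑ i, A i j) {μ : ℝ} (hμ : μ ^ 2 = 1)
    {v : ι → ℝ} (hv : normalizedAdj A *ᵥ v = μ • v) {i j : ι} (hij : 0 < A i j) :
    v j / √(∑ k, A k j) = μ * v i / √(∑ k, A i k) := by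
  refine eq_of_balanced_of_sum_sq_eq hA ((normalizedAdj_mulVec_eq_smul_iff hr μ v).1 hv) ?_ hij
  calc ∑ j, (∑ i, A i j) * (v j / √(∑ k, A k j)) ^ 2
      = ∑ j, (∑ i, A i j) * (1 * v j / √(∑ k, A k j)) ^ 2 := by simp only [one_mul]
    _ = ∑ i, (∑ j, A i j) * (μ * v i / √(∑ k, A i k)) ^ 2 := by
      simp only [sq_mul_div_sqrt_sq (hc _) (one_pow 2), sq_mul_div_sqrt_sq (hr _) hμ]

theorem mulVec_mul_eq_neg_smul {M : Matrix ι ι ℝ} {σ k : ι → ℝ}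
    (hσ : ∀ i j, M i j ≠ 0 → σ j = -σ i) {μ : ℝ} (hk : M *ᵥ k = μ • k) :
    M *ᵥ (σ * k) = -μ • (σ * k) := by
  ext i
  have hterm : ∀ j, M i j * (σ j * k j) = -σ i * (M i j * k j) := fun j => by
    by_cases hij : M i j = 0
    · simp [hij]
    · rw [hσ i j hij]; ring
  have := congrFun hk i
  simp only [mulVec, dotProduct, Pi.smul_apply, smul_eq_mul, Pi.mul_apply] at this ⊢
  rw [sum_congr rfl fun j _ => hterm j, ← mul_sum, this]
  ring

theorem normalizedAdj_div_eigenvector_neg {A : Matrix ι ι ℝ} (hA : ∀ i j, 0 ≤ A i j)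
    (hr : ∀ i, 0 < ∑ j, A i j) (hc : ∀ j, 0 < ∑ i, A i j) {k v : ι → ℝ}
    (hk : normalizedAdj A *ᵥ k = (1 : ℝ) • k) (hv : normalizedAdj A *ᵥ v = (-1 : ℝ) • v)
    {i j : ι} (hij : 0 < A i j) : v j / k j = -(v i / k i) := by
  rw [← div_div_div_cancel_right₀ (Real.sqrt_pos.2 (hc j)).ne',
    normalizedAdj_eigenvector_edge hA hr hc (by norm_num) hv hij,
    normalizedAdj_eigenvector_edge hA hr hc (one_pow 2) hk hij,
    div_div_div_cancel_right₀ (Real.sqrt_pos.2 (hr i)).ne']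
  ring

variable [DecidableEq ι]

theorem pow_apply_pos_induction {A : Matrix ι ι ℝ} (hA : ∀ i j, 0 ≤ A i j) {x : ι}
    {P : ℕ → ι → Prop} (h0 : P 0 x) (hstep : ∀ m i j, P m i → 0 < A i j → P (m + 1) j)
    {m : ℕ} {y : ι} (hm : 0 < (A ^ m) x y) : P m y := by
  induction m generalizing y with
  | zero =>
    obtain rfl : x = y := by by_contra hxy; simp [one_apply_ne hxy] at hm
    exact h0
  | succ m ih =>
    rw [pow_succ, mul_apply, sum_pos_iff_of_nonneg fun l _ =>
      mul_nonneg (pow_apply_nonneg hA m x l) (hA l y)] at hm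
    obtain ⟨l, -, hl⟩ := hm
    have hxl : 0 < (A ^ m) x l := (pow_apply_nonneg hA m x l).lt_of_ne fun h => by simp [← h] at hl
    have hly : 0 < A l y := (hA l y).lt_of_ne fun h => by simp [← h] at hl
    exact hstep m l y (ih hxl) hly

theorem pow_add_apply_pos {A : Matrix ι ι ℝ} (hA : ∀ i j, 0 ≤ A i j) {a b : ℕ} {x y z : ι}
    (hxy : 0 < (A ^ a) x y) (hyz : 0 < (A ^ b) y z) : 0 < (A ^ (a + b)) x z := by
  rw [pow_add, mul_apply]
  exact sum_pos' (fun l _ => mul_nonneg (pow_apply_nonneg hA a x l) (pow_apply_nonneg hA b l z))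
    ⟨y, mem_univ y, mul_pos hxy hyz⟩

theorem even_of_pow_apply_pos_of_neg {A : Matrix ι ι ℝ} (hA : ∀ i j, 0 ≤ A i j)
    {σ : ι → ℝ} (hσ : ∀ i j, 0 < A i j → σ j = -σ i) {x : ι} (hx : σ x ≠ 0) {m : ℕ}
    (hm : 0 < (A ^ m) x x) : Even m := by
  have hwalk : σ x = (-1) ^ m * σ x :=
    pow_apply_pos_induction hA (P := fun m y => σ y = (-1) ^ m * σ x) (by simp)
      (fun m i j hi hij => by rw [hσ i j hij, hi, pow_succ]; ring) hm
  rw [← neg_one_pow_eq_one_iff_even (by norm_num : (-1 : ℝ) ≠ 1)]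
  exact (mul_eq_right₀ hx).1 hwalk.symm

theorem exists_neg_on_edges_of_even_returns {A : Matrix ι ι ℝ} (hA : ∀ i j, 0 ≤ A i j)
    (hstrong : ∀ i j, ∃ m, 0 < m ∧ 0 < (A ^ m) i j) (x : ι)
    (heven : ∀ m, 0 < m → 0 < (A ^ m) x x → Even m) :
    ∃ σ : ι → ℝ, (∀ i, σ i ≠ 0) ∧ ∀ i j, 0 < A i j → σ j = -σ i := by
  choose d hd_pos hd using hstrong x
  refine ⟨fun i => (-1) ^ d i, fun i => by simp, fun i j hij => ?_⟩
  obtain ⟨s, -, hs⟩ := hstrong j x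
  have hi : Even (d i + 1 + s) := heven _ (by omega) <|
    pow_add_apply_pos hA (pow_add_apply_pos hA (hd i) (by rwa [pow_one])) hs
  have hj : Even (d j + s) := heven _ (by have := hd_pos j; omega) (pow_add_apply_pos hA (hd j) hs)
  have : Even (d j) ↔ ¬Even (d i) := by
    simp only [Nat.even_add, Nat.even_add_one] at hi hj
    tauto
  show (-1 : ℝ) ^ d j = -(-1) ^ d i
  rcases Nat.even_or_odd (d i) with h | h
  · rw [h.neg_one_pow, (Nat.not_even_iff_odd.1 (this.not.2 (not_not.2 h))).neg_one_pow]
  · rw [h.neg_one_pow, (this.2 (Nat.not_even_iff_odd.2 h)).neg_one_pow, neg_neg]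

theorem normalizedAdj_eigenvector_apply_ne_zero {A : Matrix ι ι ℝ} (hA : ∀ i j, 0 ≤ A i j)
    (hr : ∀ i, 0 < ∑ j, A i j) (hc : ∀ j, 0 < ∑ i, A i j)
    (hstrong : ∀ i j, ∃ m, 0 < m ∧ 0 < (A ^ m) i j) {μ : ℝ} (hμ : μ ^ 2 = 1) {v : ι → ℝ}
    (hv : normalizedAdj A *ᵥ v = μ • v) (hv0 : v ≠ 0) (i : ι) : v i ≠ 0 := by
  intro hi
  refine hv0 (funext fun j => ?_)
  obtain ⟨m, -, hm⟩ := hstrong i j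
  refine pow_apply_pos_induction hA (P := fun _ j => v j = 0) hi (fun _ a b ha hab => ?_) hm
  have hedge := normalizedAdj_eigenvector_edge hA hr hc hμ hv hab
  rw [ha, mul_zero, zero_div, div_eq_zero_iff] at hedge
  exact hedge.resolve_right (Real.sqrt_pos.2 (hc b)).ne'

end NormalizedAdjacency

theorem neg_one_eigenvalue_iff_even_period_general {N : ℕ}
    (A : Matrix (Fin N) (Fin N) ℝ)
    (hA : ∀ i j, A i j = 0 ∨ A i j = 1)
    -- strong connectivity
    (hstrong : ∀ i j : Fin N, ∃ m : ℕ, 0 < m ∧ 0 < (A ^ m) i j)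
    (din dout : Fin N → ℝ)
    (hdin : ∀ i, din i = ∑ j, A i j)
    (hdout : ∀ j, dout j = ∑ i, A i j)
    (hdin_pos : ∀ i, 0 < din i) (hdout_pos : ∀ j, 0 < dout j)
    (L : Matrix (Fin N) (Fin N) ℝ)
    (hL : ∀ i j, L i j = A i j / (Real.sqrt (din i) * Real.sqrt (dout j)))
    -- weakly balanced
    (hwb : ∃ k : Fin N → ℝ, k ≠ 0 ∧ ∀ i,
      ∑ j, A i j * (k j / Real.sqrt (dout j) - k i / Real.sqrt (din i)) = 0)
    -- `h` is the period: the gcd of the return times at every node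
    (h : ℕ)
    (hper : ∀ i : Fin N,
      (∀ m : ℕ, 0 < m → 0 < (A ^ m) i i → h ∣ m) ∧
      (∀ d : ℕ, (∀ m : ℕ, 0 < m → 0 < (A ^ m) i i → d ∣ m) → d ∣ h)) :
    (∃ v : Fin N → ℝ, v ≠ 0 ∧ L.mulVec v = (-1 : ℝ) • v) ↔ Even h := by
  have hA0 : ∀ i j, 0 ≤ A i j := fun i j => by rcases hA i j with hij | hij <;> simp [hij]
  obtain rfl : din = fun i => ∑ j, A i j := funext hdin
  obtain rfl : dout = fun j => ∑ i, A i j := funext hdout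
  obtain rfl : L = normalizedAdj A := Matrix.ext hL
  obtain ⟨k, hk0, hkbal⟩ := hwb
  have hk : normalizedAdj A *ᵥ k = (1 : ℝ) • k :=
    (normalizedAdj_mulVec_eq_smul_iff hdin_pos 1 k).2 (by simpa only [one_mul] using hkbal)
  have hk_ne := normalizedAdj_eigenvector_apply_ne_zero hA0 hdin_pos hdout_pos hstrong
    (one_pow 2) hk hk0
  have hreturns : ∀ i, (∀ m, 0 < m → 0 < (A ^ m) i i → Even m) ↔ Even h := fun i =>
    ⟨fun H => even_iff_two_dvd.2 ((hper i).2 2 fun m hm hpos => (H m hm hpos).two_dvd),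
      fun he m hm hpos => even_iff_two_dvd.2 (he.two_dvd.trans ((hper i).1 m hm hpos))⟩
  constructor
  · rintro ⟨v, hv0, hv⟩
    obtain ⟨i, hi⟩ := Function.ne_iff.mp hv0
    exact (hreturns i).1 fun m _ hm => even_of_pow_apply_pos_of_neg hA0
      (fun a b hab => normalizedAdj_div_eigenvector_neg hA0 hdin_pos hdout_pos hk hv hab)
      (div_ne_zero hi (hk_ne i)) hm
  · intro he
    obtain ⟨i0, -⟩ := Function.ne_iff.mp hk0
    obtain ⟨σ, hσ0, hσ⟩ := exists_neg_on_edges_of_even_returns hA0 hstrong i0 ((hreturns i0).2 he)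
    refine ⟨σ * k, fun h0 => mul_ne_zero (hσ0 i0) (hk_ne i0) (congrFun h0 i0),
      mulVec_mul_eq_neg_smul (fun i j hij => hσ i j ?_) hk⟩
    exact (hA0 i j).lt_of_ne fun h0 => hij (by simp [normalizedAdj, ← h0])

/-- Let `L` be the symmetrically normalized adjacency of a
strongly connected (irreducible), weakly balanced directed graph with period
`h` (the gcd of the lengths of all directed cycles, characterized here via
return times: `h` is the gcd of `{m > 0 : (A^m)_{ii} > 0}` for each node `i`).
Then `−1` is an eigenvalue of `L` if and only if `h` is even. -/
theorem neg_one_eigenvalue_iff_even_period {N : ℕ}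
    (A : Matrix (Fin N) (Fin N) ℝ)
    (hA : ∀ i j, A i j = 0 ∨ A i j = 1)
    -- strong connectivity
    (hstrong : ∀ i j : Fin N, ∃ m : ℕ, 0 < m ∧ 0 < (A ^ m) i j)
    (din dout : Fin N → ℝ)
    (hdin : ∀ i, din i = ∑ j, A i j)
    (hdout : ∀ j, dout j = ∑ i, A i j)
    (hdin_pos : ∀ i, 0 < din i) (hdout_pos : ∀ j, 0 < dout j)
    (L : Matrix (Fin N) (Fin N) ℝ)
    (hL : ∀ i j, L i j = A i j / (Real.sqrt (din i) * Real.sqrt (dout j)))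
    -- weakly balanced
    (hwb : ∃ k : Fin N → ℝ, k ≠ 0 ∧ ∀ i,
      ∑ j, A i j * (k j / Real.sqrt (dout j) - k i / Real.sqrt (din i)) = 0)
    -- `h` is the period: the gcd of the return times at every node
    (h : ℕ) (hh0 : 0 < h)
    (hper : ∀ i : Fin N,
      (∀ m : ℕ, 0 < m → 0 < (A ^ m) i i → h ∣ m) ∧
      (∀ d : ℕ, (∀ m : ℕ, 0 < m → 0 < (A ^ m) i i → d ∣ m) → d ∣ h)) :
    (∃ v : Fin N → ℝ, v ≠ 0 ∧ L.mulVec v = (-1 : ℝ) • v) ↔ Even h :=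
  neg_one_eigenvalue_iff_even_period_general A hA hstrong din dout hdin hdout hdin_pos hdout_pos L
    hL hwb h hper
end
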